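/- Let U be a unitary with U|S⟩|0⟩ = a|π⟩|0⟩ + |Γ⟩ where ‖(I ⊗ |0⟩⟨0|)|Γ⟩‖ ≤ η and (⟨π| ⊗ ⟨0|)|Γ⟩ = 0, with a = ⟨π|S⟩ ≠ 0. Then the normalized projection of U|S⟩|0⟩ onto the image of I ⊗ |0⟩⟨0| is within distance 2η/|a| of |π⟩|0⟩ (up to global phase), provided η < |a|. -/

import Mathlib

open scoped InnerProductSpace

/-!
Since `P` fixes `w`, `P x = a • w + P Γ` lies within `η` of `a • w`. Normalization moves
a vector `y` by at most `2 ‖y - z‖ / ‖z‖` relative to a nonzero `z` (triangle inequality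
through `‖z‖⁻¹ • y`), and the normalization of `a • w` is `(a / ‖a‖) • w`, which fixes the
phase.
-/

theorem norm_inv_norm_smul_sub_inv_norm_smul_le {E : Type*} [NormedAddCommGroup E]
    [NormedSpace ℝ E] (y : E) {z : E} (hz : z ≠ 0) :
    ‖‖y‖⁻¹ • y - ‖z‖⁻¹ • z‖ ≤ 2 * ‖y - z‖ / ‖z‖ := by
  have hz' : 0 < ‖z‖ := norm_pos_iff.mpr hz
  rcases eq_or_ne y 0 with rfl | hy
  · simp [norm_smul, hz'.ne']
  have hy' : 0 < ‖y‖ := norm_pos_iff.mpr hy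
  have hscale : (‖y‖⁻¹ - ‖z‖⁻¹) * ‖y‖ = (‖z‖ - ‖y‖) / ‖z‖ := by field_simp
  calc ‖‖y‖⁻¹ • y - ‖z‖⁻¹ • z‖ = ‖(‖y‖⁻¹ - ‖z‖⁻¹) • y + ‖z‖⁻¹ • (y - z)‖ := by
        congr 1; module
    _ ≤ |‖z‖ - ‖y‖| / ‖z‖ + ‖y - z‖ / ‖z‖ := by
        refine (norm_add_le _ _).trans_eq ?_
        rw [norm_smul, norm_smul, Real.norm_eq_abs, ← abs_norm y, ← abs_mul, abs_norm, hscale,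
          abs_div, abs_norm, norm_inv, norm_norm, inv_mul_eq_div]
    _ ≤ ‖y - z‖ / ‖z‖ + ‖y - z‖ / ‖z‖ := by
        gcongr
        rw [abs_sub_comm]; exact abs_norm_sub_norm_le y z
    _ = 2 * ‖y - z‖ / ‖z‖ := by ring

theorem amplified_projection_close_general
    {H : Type*} [NormedAddCommGroup H] [InnerProductSpace ℂ H]
    (P : H →ₗ[ℂ] H)
    (w Γ x : H) (a : ℂ) (η : ℝ)
    (hw : ‖w‖ = 1) (hPw : P w = w)
    (hx : x = a • w + Γ)
    (hPΓ : ‖P Γ‖ ≤ η)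
    (ha : a ≠ 0) :
    ∃ c : ℂ, ‖c‖ = 1 ∧ ‖(‖P x‖)⁻¹ • P x - c • w‖ ≤ 2 * η / ‖a‖ := by
  have hnorm : ‖a • w‖ = ‖a‖ := by rw [norm_smul, hw, mul_one]
  have hPx : P x - a • w = P Γ := by rw [hx, map_add, map_smul, hPw, add_sub_cancel_left]
  refine ⟨a / ‖a‖, by simp [ha], ?_⟩
  have hphase : (a / ‖a‖) • w = ‖a • w‖⁻¹ • (a • w) := by
    rw [hnorm, ← smul_assoc, Complex.real_smul, div_eq_inv_mul, Complex.ofReal_inv]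
  calc ‖(‖P x‖)⁻¹ • P x - (a / ‖a‖) • w‖ ≤ 2 * ‖P x - a • w‖ / ‖a • w‖ := by
        rw [hphase]
        exact norm_inv_norm_smul_sub_inv_norm_smul_le _
          (smul_ne_zero ha (ne_zero_of_norm_ne_zero (by simp [hw])))
    _ ≤ 2 * η / ‖a‖ := by rw [hPx, hnorm]; gcongr

/-- If `x = U|S⟩|0⟩ = a|π⟩|0⟩ + |Γ⟩` with `‖P Γ‖ ≤ η` and
`Γ ⊥ |π⟩|0⟩`, where `P` is the orthogonal projector onto the image of
`I ⊗ |0⟩⟨0|` (so `P` fixes `w = |π⟩|0⟩`), then the normalized projection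
`P x / ‖P x‖` is within distance `2η/|a|` of `|π⟩|0⟩` up to a global phase,
provided `η < |a|`. -/
theorem amplified_projection_close
    {H : Type*} [NormedAddCommGroup H] [InnerProductSpace ℂ H]
    (P : H →ₗ[ℂ] H)
    (hPidem : P ∘ₗ P = P)
    (hPsa : ∀ u v : H, ⟪P u, v⟫_ℂ = ⟪u, P v⟫_ℂ)
    (w Γ x : H) (a : ℂ) (η : ℝ)
    (hw : ‖w‖ = 1) (hPw : P w = w)
    (hx : x = a • w + Γ) (hxnorm : ‖x‖ = 1)
    (horth : ⟪w, Γ⟫_ℂ = 0)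
    (hPΓ : ‖P Γ‖ ≤ η) (hη : 0 ≤ η)
    (ha : a ≠ 0) (hηa : η < ‖a‖) :
    ∃ c : ℂ, ‖c‖ = 1 ∧ ‖(‖P x‖)⁻¹ • P x - c • w‖ ≤ 2 * η / ‖a‖ :=
  amplified_projection_close_general P w Γ x a η hw hPw hx hPΓ ha
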